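/- arXiv:2401.13773 — 6 statements merged into one kernel-verified Lean document; each statement's English description precedes it below -/
import Mathlib

section
/- Let k ∈ [0, 1/ρ_1]. If μ_1 − λ ≥ ρ_1, then the lifting function g_k is superadditive on [0, b]; that is, for all z_1, z_2 ∈ [0, b] with z_1 + z_2 ≤ b, one has g_k(z_1) + g_k(z_2) ≤ g_k(z_1 + z_2). -/
/-- `μ_h = a_1 + ⋯ + a_h` (as a real number). -/
noncomputable def mu (a : ℕ → ℕ) (h : ℕ) : ℝ := ∑ i ∈ Finset.Icc 1 h, (a i : ℝ)

/-- `λ = μ_t − b`, the excess weight of the cover. -/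
noncomputable def lam (a : ℕ → ℕ) (t b : ℕ) : ℝ := mu a t - (b : ℝ)

/-- `ρ_h = max(0, a_{h+1} − (a_1 − λ))`. -/
noncomputable def rho (a : ℕ → ℕ) (t b : ℕ) (h : ℕ) : ℝ :=
  max 0 ((a (h + 1) : ℝ) - ((a 1 : ℝ) - lam a t b))

/-- `w_k(x) = k·x + (1 − k·ρ₁)/2`, where `r` stands for `ρ₁`. -/
noncomputable def wk (r k x : ℝ) : ℝ := k * x + (1 - k * r) / 2

/-!
Write `L h = μ_h − λ`, so that `S_h = (L h, E h]` and `F_h = (E h, L (h + 1)]` with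
`E h = L h + ρ_h = max (L h) (L (h + 1) − L 1)`. Since the `a_i` decrease, `L` is concave on
`{0, …, t}`, which gives the exchange inequality `L m + L r ≤ L i + L j` for `m + r = i + j`,
`r ≤ i, j`. Every comparison of breakpoints needed is an instance of it: `E` is subadditive, and
a sum of points of `F_i` or `S_i` and of `F_j` or `S_j` lies far enough to the right for `g_k` to
have grown by the sum of their values. The hypothesis `ρ₁ ≤ μ₁ − λ` is what puts the sum of
points of `S_i` and `S_j` beyond `S_{i+j-1}`.
-/

theorem exists_lt_le_succ {α : Type*} [LinearOrder α] (f : ℕ → α) {z : α} {t : ℕ}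
    (h0 : f 0 < z) (ht : z ≤ f t) : ∃ h < t, f h < z ∧ z ≤ f (h + 1) := by
  classical
  have hex : ∃ n, z ≤ f n := ⟨t, ht⟩
  have hpos : Nat.find hex ≠ 0 := fun h => (Nat.find_spec hex).not_gt (h ▸ h0)
  refine ⟨Nat.find hex - 1, ?_, ?_, ?_⟩
  · have := Nat.find_min' hex ht
    omega
  · exact not_le.mp (Nat.find_min hex (by omega))
  · rw [Nat.sub_add_cancel (Nat.one_le_iff_ne_zero.mpr hpos)]
    exact Nat.find_spec hex

section Weight

variable {r k : ℝ}

theorem wk_nonneg (hk0 : 0 ≤ k) (hk : k * r ≤ 1) {x : ℝ} (hx : 0 ≤ x) : 0 ≤ wk r k x := by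
  unfold wk
  nlinarith

theorem wk_le_one (hk0 : 0 ≤ k) (hk : k * r ≤ 1) {x : ℝ} (hx : x ≤ r) : wk r k x ≤ 1 := by
  unfold wk
  nlinarith

theorem wk_mono (hk0 : 0 ≤ k) : Monotone (wk r k) := fun x y hxy => by
  unfold wk
  nlinarith

theorem one_le_wk_add (hk0 : 0 ≤ k) {x y : ℝ} (hxy : r ≤ x + y) : 1 ≤ wk r k x + wk r k y := by
  unfold wk
  nlinarith

theorem wk_le_wk_add (hk0 : 0 ≤ k) (hk : k * r ≤ 1) {x y z : ℝ} (hx : x ≤ y + z) :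
    wk r k x ≤ wk r k y + wk r k z := by
  unfold wk
  nlinarith

end Weight

/-- Abstracts `h ↦ μ_h − λ`, whose increments are the decreasing `a_h`. -/
structure IsConcaveProfile (L : ℕ → ℝ) (t : ℕ) : Prop where
  monotone : Monotone L
  sub_antitone : ∀ i j, i ≤ j → j < t → L (j + 1) - L j ≤ L (i + 1) - L i
  nonpos_zero : L 0 ≤ 0

/-- For `L h = μ_h − λ` this is `μ_h − λ + ρ_h`. -/
noncomputable def flatStart (L : ℕ → ℝ) (h : ℕ) : ℝ := max (L h) (L (h + 1) - L 1)

structure IsLiftingFunction (L : ℕ → ℝ) (t : ℕ) (k : ℝ) (g : ℝ → ℝ) : Prop where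
  map_zero : g 0 = 0
  flat : ∀ h < t, ∀ z, flatStart L h < z → z ≤ L (h + 1) → g z = h
  slope : ∀ h, 1 ≤ h → h < t → ∀ z, L h < z → z ≤ flatStart L h →
    g z = h - wk (L 2 - 2 * L 1) k (flatStart L h - z)

section Profile

variable {L : ℕ → ℝ} {t : ℕ}

theorem self_le_flatStart (h : ℕ) : L h ≤ flatStart L h := le_max_left _ _

theorem sub_le_flatStart (h : ℕ) : L (h + 1) - L 1 ≤ flatStart L h := le_max_right _ _

namespace IsConcaveProfile

theorem add_le_add_shift (hL : IsConcaveProfile L t) {r i : ℕ} (hri : r ≤ i) :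
    ∀ n, i + n ≤ t → L (i + n) + L r ≤ L i + L (r + n)
  | 0, _ => le_rfl
  | n + 1, hn => by
    have hstep := hL.sub_antitone (r + n) (i + n) (by omega) (by omega)
    have := hL.add_le_add_shift hri n (by omega)
    rw [← add_assoc, ← add_assoc]
    linarith

theorem exchange (hL : IsConcaveProfile L t) {m r i j : ℕ} (hm : m + r = i + j)
    (hri : r ≤ i) (hrj : r ≤ j) (hi : i ≤ t) (hj : j ≤ t) :
    L (min m t) + L r ≤ L i + L j := by
  -- past `t` the profile need not be concave, so exchange down to `t` and use monotonicity
  obtain ⟨r', n, hrr', hr'i, rfl, hmin, hnt⟩ : ∃ r' n, r ≤ r' ∧ r' ≤ i ∧ j = r' + n ∧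
      min m t = i + n ∧ i + n ≤ t :=
    ⟨max r (i + j - t), j - max r (i + j - t), by omega, by omega, by omega, by omega, by omega⟩
  rw [hmin]
  calc L (i + n) + L r ≤ L (i + n) + L r' := by gcongr; exact hL.monotone hrr'
    _ ≤ L i + L (r' + n) := hL.add_le_add_shift hr'i n hnt

theorem flatStart_zero (hL : IsConcaveProfile L t) : flatStart L 0 = 0 := by
  simp [flatStart, hL.nonpos_zero]

theorem flatStart_mono (hL : IsConcaveProfile L t) : Monotone (flatStart L) := fun i j hij =>
  max_le_max (hL.monotone hij) (sub_le_sub_right (hL.monotone (by omega)) _)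

theorem flatStart_sub_le (hL : IsConcaveProfile L t) (hρ : 0 ≤ L 2 - 2 * L 1) {h : ℕ}
    (h1 : 1 ≤ h) (ht : h < t) : flatStart L h - L h ≤ L 2 - 2 * L 1 := by
  have := hL.sub_antitone 1 h h1 ht
  rw [sub_le_iff_le_add']
  exact max_le (by linarith) (by linarith)

theorem flatStart_add_le (hL : IsConcaveProfile L t) {i j : ℕ} (hij : i + j < t) :
    flatStart L (i + j) ≤ flatStart L i + flatStart L j := by
  rcases Nat.eq_zero_or_pos i with rfl | hi
  · simp [hL.flatStart_zero]
  have h₁ := hL.exchange (m := i + j) (r := 1) (i := i) (j := j + 1) (by omega) hi (by omega)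
    (by omega) (by omega)
  have h₂ := hL.exchange (m := i + j + 1) (r := 1) (i := i + 1) (j := j + 1) (by omega)
    (by omega) (by omega) (by omega) (by omega)
  rw [min_eq_left (by omega)] at h₁ h₂
  have := self_le_flatStart (L := L) i
  have := sub_le_flatStart (L := L) i
  have := sub_le_flatStart (L := L) j
  exact max_le (by linarith) (by linarith)

theorem flatStart_le_of_succ_eq_add (hL : IsConcaveProfile L t) (hρ : 0 ≤ L 2 - 2 * L 1)
    (hρL : L 2 - 2 * L 1 ≤ L 1) {m i j : ℕ} (hm : m + 1 = i + j) (hi : 1 ≤ i) (hj : 1 ≤ j)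
    (hmt : m < t) : flatStart L m ≤ L i + L j := by
  have hE := hL.flatStart_sub_le hρ (by omega) hmt
  have hX := hL.exchange hm hi hj (by omega) (by omega)
  rw [min_eq_left hmt.le] at hX
  linarith

theorem min_add_le_flatStart_add (hL : IsConcaveProfile L t) {i j : ℕ} (hi : i < t)
    (hj1 : 1 ≤ j) (hj : j ≤ t) : L (min (i + j) t) ≤ flatStart L i + L j := by
  have hX := hL.exchange (m := i + j) (r := 1) (i := i + 1) (j := j) (by omega) (by omega) hj1
    (by omega) hj
  have := sub_le_flatStart (L := L) i
  linarith

theorem min_add_add_le_flatStart_add (hL : IsConcaveProfile L t) {i j : ℕ} (hi1 : 1 ≤ i)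
    (hj1 : 1 ≤ j) (hi : i < t) (hj : j < t) :
    L (min (i + j) t) + (L 2 - 2 * L 1) ≤ flatStart L i + flatStart L j := by
  have hX := hL.exchange (m := i + j) (r := 2) (i := i + 1) (j := j + 1) (by omega) (by omega)
    (by omega) (by omega) (by omega)
  have := sub_le_flatStart (L := L) i
  have := sub_le_flatStart (L := L) j
  linarith

theorem exists_flat_or_slope (hL : IsConcaveProfile L t) {z : ℝ} (hz : 0 < z) (hzt : z ≤ L t) :
    ∃ h < t, (flatStart L h < z ∧ z ≤ L (h + 1)) ∨ (1 ≤ h ∧ L h < z ∧ z ≤ flatStart L h) := by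
  obtain ⟨h, hht, hLz, hzL⟩ := exists_lt_le_succ L (hL.nonpos_zero.trans_lt hz) hzt
  refine ⟨h, hht, ?_⟩
  rcases le_or_gt z (flatStart L h) with hzE | hEz
  · have h1 : h ≠ 0 := by
      rintro rfl
      linarith [hL.flatStart_zero]
    exact Or.inr ⟨by omega, hLz, hzE⟩
  · exact Or.inl ⟨hEz, hzL⟩

end IsConcaveProfile

namespace IsLiftingFunction

variable {k : ℝ} {g : ℝ → ℝ}

theorem le_of_flatStart_lt (hg : IsLiftingFunction L t k g) (hL : IsConcaveProfile L t)
    (hρ : 0 ≤ L 2 - 2 * L 1) (hk0 : 0 ≤ k) (hk : k * (L 2 - 2 * L 1) ≤ 1) {h : ℕ} {z : ℝ}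
    (hz : flatStart L h < z) (hzt : z ≤ L t) : (h : ℝ) ≤ g z := by
  have hz0 : 0 < z := by
    linarith [hL.flatStart_zero, hL.flatStart_mono (Nat.zero_le h)]
  obtain ⟨H, hHt, ⟨hEz, hzL⟩ | ⟨hH1, hLz, hzE⟩⟩ := hL.exists_flat_or_slope hz0 hzt
  · have hhH : h ≤ H := by
      by_contra! hHh
      linarith [hL.monotone (show H + 1 ≤ h by omega), self_le_flatStart (L := L) h]
    rw [hg.flat H hHt z hEz hzL]
    exact_mod_cast hhH
  · have hhH : h + 1 ≤ H := by
      by_contra! hHh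
      linarith [hL.flatStart_mono (show H ≤ h by omega)]
    have hw := wk_le_one hk0 hk (x := flatStart L H - z)
      (by linarith [hL.flatStart_sub_le hρ hH1 hHt])
    have hcast : (h : ℝ) + 1 ≤ H := by exact_mod_cast hhH
    rw [hg.slope H hH1 hHt z hLz hzE]
    linarith

theorem sub_wk_le (hg : IsLiftingFunction L t k g) (hL : IsConcaveProfile L t)
    (hρ : 0 ≤ L 2 - 2 * L 1) (hk0 : 0 ≤ k) (hk : k * (L 2 - 2 * L 1) ≤ 1) {h : ℕ} {z : ℝ}
    (h1 : 1 ≤ h) (hz : L h < z) (hzt : z ≤ L t) :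
    h - wk (L 2 - 2 * L 1) k (max (flatStart L h - z) 0) ≤ g z := by
  rcases le_or_gt z (flatStart L h) with hzE | hEz
  · have hht : h < t := by
      by_contra! hth
      linarith [hL.monotone hth]
    rw [hg.slope h h1 hht z hz hzE, max_eq_left (by linarith)]
  · rw [max_eq_right (by linarith)]
    linarith [hg.le_of_flatStart_lt hL hρ hk0 hk hEz hzt, wk_nonneg hk0 hk (le_refl (0 : ℝ))]

theorem superadditive_flat_flat (hg : IsLiftingFunction L t k g) (hL : IsConcaveProfile L t)
    (hρ : 0 ≤ L 2 - 2 * L 1) (hk0 : 0 ≤ k) (hk : k * (L 2 - 2 * L 1) ≤ 1) {i j : ℕ}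
    {z₁ z₂ : ℝ} (hi : i < t) (hz₁ : flatStart L i < z₁) (hz₁' : z₁ ≤ L (i + 1))
    (hj : j < t) (hz₂ : flatStart L j < z₂) (hz₂' : z₂ ≤ L (j + 1)) (hs : z₁ + z₂ ≤ L t) :
    g z₁ + g z₂ ≤ g (z₁ + z₂) := by
  have hij : i + j < t := by
    by_contra! hij
    have hD := hL.min_add_add_le_flatStart_add (i := i) (j := j) (by omega) (by omega) hi hj
    rw [min_eq_right hij] at hD
    linarith
  have hA := hL.flatStart_add_le hij
  have hlow := hg.le_of_flatStart_lt hL hρ hk0 hk (h := i + j) (by linarith) hs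
  rw [hg.flat i hi z₁ hz₁ hz₁', hg.flat j hj z₂ hz₂ hz₂']
  push_cast at hlow
  exact hlow

theorem superadditive_flat_slope (hg : IsLiftingFunction L t k g) (hL : IsConcaveProfile L t)
    (hρ : 0 ≤ L 2 - 2 * L 1) (hk0 : 0 ≤ k) (hk : k * (L 2 - 2 * L 1) ≤ 1) {i j : ℕ}
    {z₁ z₂ : ℝ} (hi : i < t) (hz₁ : flatStart L i < z₁) (hz₁' : z₁ ≤ L (i + 1))
    (hj1 : 1 ≤ j) (hj : j < t) (hz₂ : L j < z₂) (hz₂' : z₂ ≤ flatStart L j)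
    (hs : z₁ + z₂ ≤ L t) :
    g z₁ + g z₂ ≤ g (z₁ + z₂) := by
  have hC := hL.min_add_le_flatStart_add hi hj1 hj.le
  have hij : i + j < t := by
    by_contra! hij
    rw [min_eq_right hij] at hC
    linarith
  rw [min_eq_left hij.le] at hC
  have hA := hL.flatStart_add_le hij
  have hlow := hg.sub_wk_le hL hρ hk0 hk (h := i + j) (by omega) (by linarith) hs
  have hw := wk_mono hk0 (r := L 2 - 2 * L 1)
    (show max (flatStart L (i + j) - (z₁ + z₂)) 0 ≤ flatStart L j - z₂ from
      max_le (by linarith) (by linarith))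
  rw [hg.flat i hi z₁ hz₁ hz₁', hg.slope j hj1 hj z₂ hz₂ hz₂']
  push_cast at hlow
  linarith

theorem superadditive_slope_slope (hg : IsLiftingFunction L t k g) (hL : IsConcaveProfile L t)
    (hρ : 0 ≤ L 2 - 2 * L 1) (hρL : L 2 - 2 * L 1 ≤ L 1) (hk0 : 0 ≤ k)
    (hk : k * (L 2 - 2 * L 1) ≤ 1) {i j : ℕ} {z₁ z₂ : ℝ}
    (hi1 : 1 ≤ i) (hi : i < t) (hz₁ : L i < z₁) (hz₁' : z₁ ≤ flatStart L i)
    (hj1 : 1 ≤ j) (hj : j < t) (hz₂ : L j < z₂) (hz₂' : z₂ ≤ flatStart L j)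
    (hs : z₁ + z₂ ≤ L t) :
    g z₁ + g z₂ ≤ g (z₁ + z₂) := by
  obtain ⟨m, hm⟩ : ∃ m, m + 1 = i + j := ⟨i + j - 1, by omega⟩
  have hmt : m < t := by
    by_contra! hmt
    have hX := hL.exchange hm hi1 hj1 hi.le hj.le
    rw [min_eq_right hmt] at hX
    linarith
  have hB := hL.flatStart_le_of_succ_eq_add hρ hρL hm hi1 hj1 hmt
  rw [hg.slope i hi1 hi z₁ hz₁ hz₁', hg.slope j hj1 hj z₂ hz₂ hz₂']
  rcases le_or_gt (z₁ + z₂) (L (i + j)) with hsL | hLs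
  · -- the sum falls into `F_m` (or beyond), and the two slopes together lose at least one unit
    have hD := hL.min_add_add_le_flatStart_add hi1 hj1 hi hj
    rw [min_eq_left (by omega)] at hD
    have hw := one_le_wk_add hk0 (r := L 2 - 2 * L 1)
      (show L 2 - 2 * L 1 ≤ (flatStart L i - z₁) + (flatStart L j - z₂) by linarith)
    have hlow := hg.le_of_flatStart_lt hL hρ hk0 hk (h := m) (by linarith) hs
    have hmij : (m : ℝ) + 1 = i + j := by exact_mod_cast hm
    linarith
  · have hij : i + j < t := by
      by_contra! hij
      linarith [hL.monotone hij]
    have hA := hL.flatStart_add_le hij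
    have hlow := hg.sub_wk_le hL hρ hk0 hk (h := i + j) (by omega) hLs hs
    have hw := wk_le_wk_add hk0 hk
      (show max (flatStart L (i + j) - (z₁ + z₂)) 0 ≤
          (flatStart L i - z₁) + (flatStart L j - z₂) from
        max_le (by linarith) (by linarith))
    push_cast at hlow
    linarith

theorem superadditive (hg : IsLiftingFunction L t k g) (hL : IsConcaveProfile L t)
    (hρ : 0 ≤ L 2 - 2 * L 1) (hρL : L 2 - 2 * L 1 ≤ L 1) (hk0 : 0 ≤ k)
    (hk : k * (L 2 - 2 * L 1) ≤ 1) {z₁ z₂ : ℝ} (hz₁ : 0 ≤ z₁) (hz₂ : 0 ≤ z₂)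
    (hs : z₁ + z₂ ≤ L t) :
    g z₁ + g z₂ ≤ g (z₁ + z₂) := by
  rcases hz₁.eq_or_lt with rfl | hz₁
  · simp [hg.map_zero]
  rcases hz₂.eq_or_lt with rfl | hz₂
  · simp [hg.map_zero]
  obtain ⟨i, hi, ⟨hF₁, hF₁'⟩ | ⟨hi1, hS₁, hS₁'⟩⟩ := hL.exists_flat_or_slope hz₁ (by linarith) <;>
  obtain ⟨j, hj, ⟨hF₂, hF₂'⟩ | ⟨hj1, hS₂, hS₂'⟩⟩ := hL.exists_flat_or_slope hz₂ (by linarith)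
  · exact hg.superadditive_flat_flat hL hρ hk0 hk hi hF₁ hF₁' hj hF₂ hF₂' hs
  · exact hg.superadditive_flat_slope hL hρ hk0 hk hi hF₁ hF₁' hj1 hj hS₂ hS₂' hs
  · rw [add_comm (g z₁), add_comm z₁]
    exact hg.superadditive_flat_slope hL hρ hk0 hk hj hF₂ hF₂' hi1 hi hS₁ hS₁' (by linarith)
  · exact hg.superadditive_slope_slope hL hρ hρL hk0 hk hi1 hi hS₁ hS₁' hj1 hj hS₂ hS₂' hs

end IsLiftingFunction

end Profile

noncomputable def slopeStart (a : ℕ → ℕ) (t b h : ℕ) : ℝ := mu a h - lam a t b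

theorem mu_succ (a : ℕ → ℕ) (h : ℕ) : mu a (h + 1) = mu a h + a (h + 1) :=
  Finset.sum_Icc_succ_top (by omega) _

theorem slopeStart_succ (a : ℕ → ℕ) (t b h : ℕ) :
    slopeStart a t b (h + 1) = slopeStart a t b h + a (h + 1) := by
  simp only [slopeStart, mu_succ]
  ring

theorem slopeStart_self (a : ℕ → ℕ) (t b : ℕ) : slopeStart a t b t = b := by
  simp [slopeStart, lam]

theorem slopeStart_one (a : ℕ → ℕ) (t b : ℕ) : slopeStart a t b 1 = a 1 - lam a t b := by
  simp [slopeStart, mu]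

theorem flatStart_slopeStart (a : ℕ → ℕ) (t b h : ℕ) :
    flatStart (slopeStart a t b) h = slopeStart a t b h + rho a t b h := by
  rw [flatStart, rho, ← max_add_add_left, slopeStart_succ, slopeStart_one]
  congr 1 <;> ring

theorem rho_one_eq {a : ℕ → ℕ} {t b : ℕ} (hρ : 0 < rho a t b 1) :
    rho a t b 1 = slopeStart a t b 2 - 2 * slopeStart a t b 1 := by
  rw [rho, max_eq_right ((lt_max_iff.mp hρ).resolve_left (lt_irrefl 0)).le]
  linarith [slopeStart_succ a t b 1, slopeStart_one a t b]

theorem isConcaveProfile_slopeStart {a : ℕ → ℕ} {t b : ℕ}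
    (hmono : ∀ i j, 1 ≤ i → i ≤ j → j ≤ t → a j ≤ a i) (hcover : (b : ℝ) < mu a t) :
    IsConcaveProfile (slopeStart a t b) t where
  monotone := monotone_nat_of_le_succ fun h => by
    rw [slopeStart_succ]
    exact le_add_of_nonneg_right (Nat.cast_nonneg _)
  sub_antitone i j hij hjt := by
    simp only [slopeStart_succ, add_sub_cancel_left]
    exact_mod_cast hmono (i + 1) (j + 1) (by omega) (by omega) hjt
  nonpos_zero := by
    have : mu a 0 = 0 := by simp [mu]
    simp only [slopeStart, lam, this]
    linarith

theorem gk_superadditive_general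
    (t b : ℕ) (a : ℕ → ℕ) (k : ℝ) (g : ℝ → ℝ)
    (hmono : ∀ i j, 1 ≤ i → i ≤ j → j ≤ t → a j ≤ a i)
    (hcover : (b : ℝ) < mu a t)
    (hrho1 : 0 < rho a t b 1)
    (hk0 : 0 ≤ k) (hk1 : k ≤ 1 / rho a t b 1)
    (hmain : rho a t b 1 ≤ mu a 1 - lam a t b)
    (hg0 : g 0 = 0)
    (hgF : ∀ h : ℕ, h ≤ t - 1 → ∀ z : ℝ,
      mu a h - lam a t b + rho a t b h < z → z ≤ mu a (h + 1) - lam a t b →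
      g z = (h : ℝ))
    (hgS : ∀ h : ℕ, 1 ≤ h → h ≤ t - 1 → ∀ z : ℝ,
      mu a h - lam a t b < z → z ≤ mu a h - lam a t b + rho a t b h →
      g z = (h : ℝ) - wk (rho a t b 1) k (mu a h - lam a t b + rho a t b h - z)) :
    ∀ z₁ z₂ : ℝ, 0 ≤ z₁ → z₁ ≤ (b : ℝ) → 0 ≤ z₂ → z₂ ≤ (b : ℝ) →
      z₁ + z₂ ≤ (b : ℝ) → g z₁ + g z₂ ≤ g (z₁ + z₂) := by
  intro z₁ z₂ hz₁ _ hz₂ _ hs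
  have hL := isConcaveProfile_slopeStart hmono hcover
  have hρ := rho_one_eq hrho1
  have hg : IsLiftingFunction (slopeStart a t b) t k g := by
    refine ⟨hg0, fun h ht z hz hz' => ?_, fun h h1 ht z hz hz' => ?_⟩
    · rw [flatStart_slopeStart] at hz
      exact hgF h (by omega) z hz hz'
    · rw [flatStart_slopeStart] at hz' ⊢
      rw [← hρ]
      exact hgS h h1 (by omega) z hz hz'
  rw [hρ] at hrho1 hk1 hmain
  exact hg.superadditive hL hrho1.le hmain hk0 ((le_div_iff₀ hrho1).mp hk1)
    hz₁ hz₂ (by rwa [slopeStart_self])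

/-- If `k ∈ [0, 1/ρ₁]` and `μ₁ − λ ≥ ρ₁`, then the lifting function
`g_k` is superadditive on `[0, b]`. -/
theorem gk_superadditive
    (t b : ℕ) (a : ℕ → ℕ) (k : ℝ) (g : ℝ → ℝ)
    (ht : 2 ≤ t)
    (hpos : ∀ i, 1 ≤ i → i ≤ t → 0 < a i)
    (hmono : ∀ i j, 1 ≤ i → i ≤ j → j ≤ t → a j ≤ a i)
    (hcover : (b : ℝ) < mu a t)
    (hmin : mu a t - (a t : ℝ) ≤ (b : ℝ))
    (hrho1 : 0 < rho a t b 1)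
    (hk0 : 0 ≤ k) (hk1 : k ≤ 1 / rho a t b 1)
    (hmain : rho a t b 1 ≤ mu a 1 - lam a t b)
    (hg0 : g 0 = 0)
    (hgF : ∀ h : ℕ, h ≤ t - 1 → ∀ z : ℝ,
      mu a h - lam a t b + rho a t b h < z → z ≤ mu a (h + 1) - lam a t b →
      g z = (h : ℝ))
    (hgS : ∀ h : ℕ, 1 ≤ h → h ≤ t - 1 → ∀ z : ℝ,
      mu a h - lam a t b < z → z ≤ mu a h - lam a t b + rho a t b h →
      g z = (h : ℝ) - wk (rho a t b 1) k (mu a h - lam a t b + rho a t b h - z)) :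
    ∀ z₁ z₂ : ℝ, 0 ≤ z₁ → z₁ ≤ (b : ℝ) → 0 ≤ z₂ → z₂ ≤ (b : ℝ) →
      z₁ + z₂ ≤ (b : ℝ) → g z₁ + g z₂ ≤ g (z₁ + z₂) :=
  gk_superadditive_general t b a k g hmono hcover hrho1 hk0 hk1 hmain hg0 hgF hgS
end

section
/- Let k ∈ [0, 1/ρ_1] and assume μ_1 − λ ≥ ρ_1. Then the sequence-independent lifting of the minimal cover inequality by g_k is valid: for every x ∈ P, ∑_{j=1}^t x_j + ∑_{j=t+1}^n g_k(a_j) x_j ≤ t − 1. -/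
open Finset

namespace GkLifting

lemma mu_zero (a : ℕ → ℕ) : mu a 0 = 0 := by simp [mu]

lemma mu_one (a : ℕ → ℕ) : mu a 1 = a 1 := by simp [mu]

lemma mu_succ (a : ℕ → ℕ) (h : ℕ) : mu a (h + 1) = mu a h + a (h + 1) :=
  sum_Icc_succ_top (Nat.le_add_left 1 h) _

lemma mu_mono (a : ℕ → ℕ) : Monotone (mu a) :=
  monotone_nat_of_le_succ fun h => by
    rw [mu_succ]; exact le_add_of_nonneg_right (Nat.cast_nonneg _)

/-- `h ↦ μ_h` is concave on `[0, t]`. -/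
lemma mu_add_add_le {a : ℕ → ℕ} {t : ℕ} (hmono : ∀ i j, 1 ≤ i → i ≤ j → j ≤ t → a j ≤ a i)
    (p q c : ℕ) (hpqc : p + q + c ≤ t) :
    mu a (p + q + c) + mu a c ≤ mu a (p + c) + mu a (q + c) := by
  induction p with
  | zero => rw [zero_add, zero_add, add_comm]
  | succ p ih =>
    have ha : (a (p + q + c + 1) : ℝ) ≤ a (p + c + 1) := by
      exact_mod_cast hmono _ _ (by omega) (by omega) (by omega)
    rw [show p + 1 + q + c = p + q + c + 1 by omega, show p + 1 + c = p + c + 1 by omega,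
      mu_succ, mu_succ]
    linarith [ih (by omega)]

section wk

variable {r k : ℝ}

lemma wk_nonneg (hk : 0 ≤ k) (hkr : k * r ≤ 1) {x : ℝ} (hx : 0 ≤ x) : 0 ≤ wk r k x := by
  unfold wk; nlinarith

lemma wk_le_one (hk : 0 ≤ k) (hkr : k * r ≤ 1) {x : ℝ} (hx : x ≤ r) : wk r k x ≤ 1 := by
  unfold wk; nlinarith

lemma wk_mono (hk : 0 ≤ k) : Monotone (wk r k) := fun x y hxy => by
  unfold wk; nlinarith

lemma wk_add_le (hkr : k * r ≤ 1) (x y : ℝ) : wk r k (x + y) ≤ wk r k x + wk r k y := by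
  unfold wk; nlinarith

lemma one_le_wk_add (hk : 0 ≤ k) {x y : ℝ} (hxy : r ≤ x + y) : 1 ≤ wk r k x + wk r k y := by
  unfold wk; nlinarith

end wk

section cover

variable {a : ℕ → ℕ} {t b : ℕ}

/- `M[h]` and `E[h]` are the end points of the slope `S_h = (M[h], E[h]]`;
the flat piece is `F_h = (E[h], M[h + 1]]`. -/
local notation "M[" h "]" => mu a h - lam a t b
local notation "E[" h "]" => mu a h - lam a t b + rho a t b h

lemma rho_nonneg (h : ℕ) : 0 ≤ rho a t b h := le_max_left _ _

lemma mu_succ_sub_mu_one_le (h : ℕ) : mu a (h + 1) - mu a 1 ≤ E[h] := by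
  have := le_max_right 0 ((a (h + 1) : ℝ) - (a 1 - lam a t b))
  rw [mu_succ, mu_one]; unfold rho; linarith

lemma E_zero (hl : 0 ≤ lam a t b) : E[0] = 0 := by
  simp [rho, mu_zero, hl]

lemma rho_le (hl1 : lam a t b ≤ a 1) (h : ℕ) : rho a t b h ≤ a (h + 1) :=
  max_le (Nat.cast_nonneg _) (by linarith)

lemma rho_anti (hmono : ∀ i j, 1 ≤ i → i ≤ j → j ≤ t → a j ≤ a i) {h h' : ℕ} (hh : h ≤ h')
    (h't : h' + 1 ≤ t) : rho a t b h' ≤ rho a t b h := by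
  have : (a (h' + 1) : ℝ) ≤ a (h + 1) := by exact_mod_cast hmono _ _ (by omega) (by omega) h't
  exact max_le_max le_rfl (by linarith)

lemma rho_one_eq (hrho1 : 0 < rho a t b 1) : rho a t b 1 = mu a 2 - 2 * mu a 1 + lam a t b := by
  have h2 : mu a 2 = a 1 + a 2 := by rw [mu_succ, mu_one]
  rw [h2, mu_one]
  rcases max_choice 0 ((a 2 : ℝ) - (a 1 - lam a t b)) with h | h
  · exact absurd h (by unfold rho at hrho1; exact hrho1.ne')
  · unfold rho; rw [h]; ring

lemma E_mono (hl1 : lam a t b ≤ a 1) : Monotone fun h => E[h] :=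
  monotone_nat_of_le_succ fun h => by
    linarith [mu_succ a h, rho_le hl1 h, rho_nonneg (a := a) (t := t) (b := b) (h + 1)]

variable (hmono : ∀ i j, 1 ≤ i → i ≤ j → j ≤ t → a j ≤ a i)
include hmono

lemma M_add_le {h₁ h₂ : ℕ} (h1 : 1 ≤ h₁) (hH : h₁ + h₂ ≤ t) : M[h₁ + h₂] ≤ M[h₁] + E[h₂] := by
  have := mu_add_add_le hmono h₂ (h₁ - 1) 1 (by omega)
  rw [show h₂ + (h₁ - 1) + 1 = h₁ + h₂ by omega, show h₁ - 1 + 1 = h₁ by omega] at this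
  linarith [mu_succ_sub_mu_one_le (a := a) (t := t) (b := b) h₂]

lemma M_le_add_E_of_le_add (hl1 : lam a t b ≤ a 1) {h₁ h₂ : ℕ} (h1 : 1 ≤ h₁) (h1t : h₁ ≤ t)
    (hH : t ≤ h₁ + h₂) : M[t] ≤ M[h₁] + E[h₂] := by
  have := M_add_le (b := b) (h₂ := t - h₁) hmono h1 (by omega)
  rw [Nat.add_sub_of_le h1t] at this
  linarith [E_mono hl1 (show t - h₁ ≤ h₂ by omega)]

lemma E_add_le (hl : 0 ≤ lam a t b) {h₁ h₂ : ℕ} (hH : h₁ + h₂ + 1 ≤ t) :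
    E[h₁ + h₂] ≤ E[h₁] + E[h₂] := by
  rcases Nat.eq_zero_or_pos h₁ with rfl | h1
  · rw [E_zero hl, zero_add, zero_add]
  · linarith [M_add_le (b := b) (h₂ := h₂) hmono h1 (by omega),
      rho_anti (b := b) hmono (show h₁ ≤ h₁ + h₂ by omega) hH]

lemma mu_add_add_two_le {h₁ h₂ : ℕ} (h1 : 1 ≤ h₁) (h2 : 1 ≤ h₂) (hH : h₁ + h₂ ≤ t) :
    mu a (h₁ + h₂) + mu a 2 ≤ mu a (h₁ + 1) + mu a (h₂ + 1) := by
  have := mu_add_add_le hmono (h₁ - 1) (h₂ - 1) 2 (by omega)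
  rwa [show h₁ - 1 + (h₂ - 1) + 2 = h₁ + h₂ by omega, show h₁ - 1 + 2 = h₁ + 1 by omega,
    show h₂ - 1 + 2 = h₂ + 1 by omega] at this

lemma M_add_rho_one_le (hrho1 : 0 < rho a t b 1) {h₁ h₂ : ℕ} (h1 : 1 ≤ h₁) (h2 : 1 ≤ h₂)
    (hH : h₁ + h₂ ≤ t) : M[h₁ + h₂] + rho a t b 1 ≤ E[h₁] + E[h₂] := by
  linarith [mu_add_add_two_le hmono h1 h2 hH, rho_one_eq hrho1,
    mu_succ_sub_mu_one_le (a := a) (t := t) (b := b) h₁,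
    mu_succ_sub_mu_one_le (a := a) (t := t) (b := b) h₂]

lemma mu_add_sub_one_le {h₁ h₂ : ℕ} (h1 : 1 ≤ h₁) (h2 : 1 ≤ h₂) (hH : h₁ + h₂ ≤ t + 1) :
    mu a (h₁ + h₂ - 1) + mu a 1 ≤ mu a h₁ + mu a h₂ := by
  have := mu_add_add_le hmono (h₁ - 1) (h₂ - 1) 1 (by omega)
  rwa [show h₁ - 1 + (h₂ - 1) + 1 = h₁ + h₂ - 1 by omega, Nat.sub_add_cancel h1,
    Nat.sub_add_cancel h2] at this

lemma M_le_add_M_of_lt_add (hl1 : lam a t b ≤ a 1) {h₁ h₂ : ℕ} (h1 : 1 ≤ h₁) (h1t : h₁ ≤ t)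
    (hH : t < h₁ + h₂) : M[t] ≤ M[h₁] + M[h₂] := by
  have := mu_add_sub_one_le hmono h1 (show 1 ≤ t + 1 - h₁ by omega) (by omega)
  rw [show h₁ + (t + 1 - h₁) - 1 = t by omega, mu_one] at this
  linarith [mu_mono a (show t + 1 - h₁ ≤ h₂ by omega)]

lemma E_sub_one_le (hrho1 : 0 < rho a t b 1) (hmain : rho a t b 1 ≤ mu a 1 - lam a t b)
    {h₁ h₂ : ℕ} (h1 : 1 ≤ h₁) (h2 : 1 ≤ h₂) (hH : h₁ + h₂ ≤ t) :
    E[h₁ + h₂ - 1] ≤ M[h₁] + M[h₂] := by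
  have hsub := mu_add_sub_one_le hmono h1 h2 (by omega)
  have htwo := mu_add_add_two_le hmono h1 h2 hH
  have ha₁ : (a (h₁ + 1) : ℝ) ≤ a 2 := by exact_mod_cast hmono _ _ (by omega) (by omega) (by omega)
  have ha₂ : (a (h₂ + 1) : ℝ) ≤ a 2 := by exact_mod_cast hmono _ _ (by omega) (by omega) (by omega)
  have hlast := mu_succ a (h₁ + h₂ - 1)
  have hρ₁ := rho_one_eq hrho1
  unfold rho
  rw [Nat.sub_add_cancel (show 1 ≤ h₁ + h₂ by omega)] at hlast ⊢
  have : max 0 ((a (h₁ + h₂) : ℝ) - (a 1 - lam a t b)) ≤ M[h₁] + M[h₂] - M[h₁ + h₂ - 1] :=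
    max_le (by linarith)
      (by linarith [mu_one a, mu_succ a 1, mu_succ a h₁, mu_succ a h₂])
  linarith

end cover

lemma exists_lt_le_succ {f : ℕ → ℝ} {z : ℝ} {t : ℕ} (h0 : f 0 < z) (ht : z ≤ f t) :
    ∃ h, h + 1 ≤ t ∧ f h < z ∧ z ≤ f (h + 1) := by
  induction t with
  | zero => exact absurd ht (not_le.mpr h0)
  | succ t ih =>
    by_cases hz : z ≤ f t
    · obtain ⟨h, hht, hh⟩ := ih hz
      exact ⟨h, by omega, hh⟩
    · exact ⟨t, le_rfl, not_le.mp hz, ht⟩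

section gk

variable {a : ℕ → ℕ} {t b : ℕ} {k : ℝ} {g : ℝ → ℝ}

local notation "M[" h "]" => mu a h - lam a t b
local notation "E[" h "]" => mu a h - lam a t b + rho a t b h

lemma exists_mem_F_or_S (hl : 0 ≤ lam a t b) {z : ℝ} (hz : 0 < z) (hzt : z ≤ M[t]) :
    ∃ h, h + 1 ≤ t ∧ ((E[h] < z ∧ z ≤ M[h + 1]) ∨ (1 ≤ h ∧ M[h] < z ∧ z ≤ E[h])) := by
  obtain ⟨h, hht, hlo, hhi⟩ :=
    exists_lt_le_succ (f := fun h => M[h]) (by simp only [mu_zero]; linarith) hzt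
  refine ⟨h, hht, ?_⟩
  rcases Nat.eq_zero_or_pos h with rfl | h1
  · exact Or.inl ⟨by rwa [E_zero hl], hhi⟩
  · by_cases hzE : z ≤ E[h]
    · exact Or.inr ⟨h1, hlo, hzE⟩
    · exact Or.inl ⟨not_le.mp hzE, hhi⟩

variable (hmono : ∀ i j, 1 ≤ i → i ≤ j → j ≤ t → a j ≤ a i)
  (hl : 0 ≤ lam a t b) (hl1 : lam a t b ≤ a 1) (hk0 : 0 ≤ k) (hkr : k * rho a t b 1 ≤ 1)
  (hgF : ∀ h : ℕ, h ≤ t - 1 → ∀ z : ℝ,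
    mu a h - lam a t b + rho a t b h < z → z ≤ mu a (h + 1) - lam a t b → g z = h)
  (hgS : ∀ h : ℕ, 1 ≤ h → h ≤ t - 1 → ∀ z : ℝ,
    mu a h - lam a t b < z → z ≤ mu a h - lam a t b + rho a t b h →
    g z = h - wk (rho a t b 1) k (mu a h - lam a t b + rho a t b h - z))

include hmono hl hl1 hk0 hkr hgF hgS in
lemma le_g_of_E_lt {h : ℕ} {z : ℝ} (hz : E[h] < z) (hzt : z ≤ M[t]) :
    (h : ℝ) ≤ g z := by
  have hE : E[0] ≤ E[h] := E_mono hl1 (Nat.zero_le h)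
  rw [E_zero hl] at hE
  have hz0 : 0 < z := by linarith
  obtain ⟨h', hh't, ⟨hz1, hz2⟩ | ⟨h1, hz1, hz2⟩⟩ := exists_mem_F_or_S hl hz0 hzt
  · rw [hgF h' (by omega) z hz1 hz2]
    have : h ≤ h' := by
      by_contra! hlt
      linarith [mu_mono a (show h' + 1 ≤ h by omega), rho_nonneg (a := a) (t := t) (b := b) h]
    exact_mod_cast this
  · rw [hgS h' h1 (by omega) z hz1 hz2]
    have : h + 1 ≤ h' := by
      by_contra! hlt
      linarith [E_mono hl1 (show h' ≤ h by omega)]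
    have hw := wk_le_one hk0 hkr (x := E[h'] - z)
      (by linarith [rho_anti (b := b) hmono h1 hh't])
    have : (h : ℝ) + 1 ≤ h' := by exact_mod_cast this
    linarith

include hmono hl hl1 hk0 hkr hgF hgS in
lemma le_g_of_M_lt {h : ℕ} (h1 : 1 ≤ h) (hht : h + 1 ≤ t) {z : ℝ} (hz : M[h] < z)
    (hzt : z ≤ M[t]) {y : ℝ} (hy : 0 ≤ y) (hyz : E[h] - z ≤ y) :
    h - wk (rho a t b 1) k y ≤ g z := by
  by_cases hzE : z ≤ E[h]
  · rw [hgS h h1 (by omega) z hz hzE]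
    linarith [wk_mono (r := rho a t b 1) hk0 hyz]
  · linarith [le_g_of_E_lt hmono hl hl1 hk0 hkr hgF hgS (not_le.mp hzE) hzt,
      wk_nonneg hk0 hkr hy]

include hl hk0 hkr hgF hgS in
lemma g_le_of_le_M (hg0 : g 0 = 0) {h : ℕ} (h1 : 1 ≤ h) (hht : h ≤ t) {z : ℝ} (hz0 : 0 ≤ z)
    (hz : z ≤ M[h]) : g z ≤ h - 1 := by
  have h1' : (1 : ℝ) ≤ h := by exact_mod_cast h1
  rcases hz0.eq_or_lt with rfl | hz0
  · linarith
  obtain ⟨h', hh't, ⟨hz1, hz2⟩ | ⟨h1', hz1, hz2⟩⟩ :=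
    exists_mem_F_or_S hl hz0 (hz.trans (by linarith [mu_mono a hht]))
  · rw [hgF h' (by omega) z hz1 hz2]
    have : h' + 1 ≤ h := by
      by_contra! hlt
      linarith [mu_mono a (show h ≤ h' by omega), rho_nonneg (a := a) (t := t) (b := b) h']
    have : (h' : ℝ) + 1 ≤ h := by exact_mod_cast this
    linarith
  · rw [hgS h' h1' (by omega) z hz1 hz2]
    have : h' + 1 ≤ h := by
      by_contra! hlt
      linarith [mu_mono a (show h ≤ h' by omega)]
    have : (h' : ℝ) + 1 ≤ h := by exact_mod_cast this
    linarith [wk_nonneg hk0 hkr (x := E[h'] - z) (by linarith)]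

include hmono hl hl1 hk0 hkr hgF hgS in
lemma g_add_le_of_F_of_F {h₁ h₂ : ℕ} (h1t : h₁ + 1 ≤ t) (h2t : h₂ + 1 ≤ t) {u v : ℝ}
    (hu : E[h₁] < u) (hu' : u ≤ M[h₁ + 1]) (hv : E[h₂] < v) (hv' : v ≤ M[h₂ + 1])
    (huv : u + v ≤ M[t]) : g u + g v ≤ g (u + v) := by
  rw [hgF h₁ (by omega) u hu hu', hgF h₂ (by omega) v hv hv']
  rcases lt_or_ge (h₁ + h₂) t with hH | hH
  · have := le_g_of_E_lt hmono hl hl1 hk0 hkr hgF hgS (h := h₁ + h₂)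
      (by linarith [E_add_le hmono hl hH]) huv
    push_cast at this
    linarith
  · have h1 : 1 ≤ h₁ := by omega
    linarith [M_le_add_E_of_le_add hmono hl1 h1 (by omega) hH,
      rho_nonneg (a := a) (t := t) (b := b) h₁]

include hmono hl hl1 hk0 hkr hgF hgS in
lemma g_add_le_of_S_of_F {h₁ h₂ : ℕ} (h1 : 1 ≤ h₁) (h1t : h₁ + 1 ≤ t) (h2t : h₂ + 1 ≤ t)
    {u v : ℝ} (hu : M[h₁] < u) (hu' : u ≤ E[h₁]) (hv : E[h₂] < v) (hv' : v ≤ M[h₂ + 1])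
    (huv : u + v ≤ M[t]) : g u + g v ≤ g (u + v) := by
  rw [hgS h₁ h1 (by omega) u hu hu', hgF h₂ (by omega) v hv hv']
  rcases lt_or_ge (h₁ + h₂) t with hH | hH
  · have := le_g_of_M_lt hmono hl hl1 hk0 hkr hgF hgS (h := h₁ + h₂) (by omega) hH
      (by linarith [M_add_le (b := b) hmono h1 hH.le]) huv (y := E[h₁] - u) (by linarith)
      (by linarith [E_add_le hmono hl hH])
    push_cast at this
    linarith
  · linarith [M_le_add_E_of_le_add hmono hl1 h1 (by omega) hH]

include hmono hl hl1 hk0 hkr hgF hgS in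
lemma g_add_le_of_S_of_S (hrho1 : 0 < rho a t b 1) (hmain : rho a t b 1 ≤ mu a 1 - lam a t b)
    {h₁ h₂ : ℕ} (h1 : 1 ≤ h₁) (h2 : 1 ≤ h₂) (h1t : h₁ + 1 ≤ t) (h2t : h₂ + 1 ≤ t)
    {u v : ℝ} (hu : M[h₁] < u) (hu' : u ≤ E[h₁]) (hv : M[h₂] < v) (hv' : v ≤ E[h₂])
    (huv : u + v ≤ M[t]) : g u + g v ≤ g (u + v) := by
  rw [hgS h₁ h1 (by omega) u hu hu', hgS h₂ h2 (by omega) v hv hv']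
  rcases lt_or_ge t (h₁ + h₂) with hH | hH
  · linarith [M_le_add_M_of_lt_add hmono hl1 h1 (by omega) hH]
  rcases le_or_gt (u + v) M[h₁ + h₂] with hc | hc
  · have hF := hgF (h₁ + h₂ - 1) (by omega) (u + v)
      (by linarith [E_sub_one_le hmono hrho1 hmain h1 h2 hH])
      (by rwa [Nat.sub_add_cancel (by omega)])
    have hw := one_le_wk_add (r := rho a t b 1) hk0 (x := E[h₁] - u) (y := E[h₂] - v)
      (by linarith [M_add_rho_one_le hmono hrho1 h1 h2 hH])
    rw [hF, Nat.cast_sub (by omega)]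
    push_cast
    linarith
  · have hH' : h₁ + h₂ + 1 ≤ t := by
      rcases hH.lt_or_eq with hlt | heq
      · exact hlt
      · rw [heq] at hc; linarith
    have := le_g_of_M_lt hmono hl hl1 hk0 hkr hgF hgS (h := h₁ + h₂) (by omega) hH' hc huv
      (y := (E[h₁] - u) + (E[h₂] - v)) (by linarith) (by linarith [E_add_le hmono hl hH'])
    have hw := wk_add_le hkr (E[h₁] - u) (E[h₂] - v)
    push_cast at this
    linarith

include hmono hl hl1 hk0 hkr hgF hgS in
theorem g_superadditive (hrho1 : 0 < rho a t b 1) (hmain : rho a t b 1 ≤ mu a 1 - lam a t b)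
    (hg0 : g 0 = 0) {u v : ℝ} (hu : 0 ≤ u) (hv : 0 ≤ v) (huv : u + v ≤ M[t]) :
    g u + g v ≤ g (u + v) := by
  rcases hu.eq_or_lt with rfl | hu
  · rw [hg0, zero_add, zero_add]
  rcases hv.eq_or_lt with rfl | hv
  · rw [hg0, add_zero, add_zero]
  obtain ⟨h₁, h1t, ⟨hu1, hu2⟩ | ⟨h1, hu1, hu2⟩⟩ := exists_mem_F_or_S hl hu (by linarith)
    <;> obtain ⟨h₂, h2t, ⟨hv1, hv2⟩ | ⟨h2, hv1, hv2⟩⟩ := exists_mem_F_or_S hl hv (by linarith)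
  · exact g_add_le_of_F_of_F hmono hl hl1 hk0 hkr hgF hgS h1t h2t hu1 hu2 hv1 hv2 huv
  · rw [add_comm (g u), add_comm u]
    exact g_add_le_of_S_of_F hmono hl hl1 hk0 hkr hgF hgS h2 h2t h1t hv1 hv2 hu1 hu2
      (by linarith)
  · exact g_add_le_of_S_of_F hmono hl hl1 hk0 hkr hgF hgS h1 h1t h2t hu1 hu2 hv1 hv2 huv
  · exact g_add_le_of_S_of_S hmono hl hl1 hk0 hkr hgF hgS hrho1 hmain h1 h2 h1t h2t
      hu1 hu2 hv1 hv2 huv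

end gk

lemma sum_le_of_superadditive {ι : Type*} {g : ℝ → ℝ} {B : ℝ} (hg0 : g 0 = 0)
    (hsup : ∀ u v, 0 ≤ u → 0 ≤ v → u + v ≤ B → g u + g v ≤ g (u + v))
    (s : Finset ι) {f : ι → ℝ} (hf : ∀ i ∈ s, 0 ≤ f i) (hs : ∑ i ∈ s, f i ≤ B) :
    ∑ i ∈ s, g (f i) ≤ g (∑ i ∈ s, f i) := by
  induction s using Finset.cons_induction with
  | empty => rw [sum_empty, sum_empty, hg0]
  | cons j s hj ih =>
    rw [sum_cons] at hs
    have hf' : ∀ i ∈ s, 0 ≤ f i := fun i hi => hf i (mem_cons_of_mem hi)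
    have hs0 : 0 ≤ ∑ i ∈ s, f i := sum_nonneg hf'
    rw [sum_cons, sum_cons]
    calc g (f j) + ∑ i ∈ s, g (f i) ≤ g (f j) + g (∑ i ∈ s, f i) :=
          by gcongr; exact ih hf' (by linarith [hf j (mem_cons_self j s)])
      _ ≤ g (f j + ∑ i ∈ s, f i) := hsup _ _ (hf j (mem_cons_self j s)) hs0 hs

/-- The `#S` items of a set `S ⊆ {1, …, t'}` weigh at least as much as the `#S` lightest ones. -/
lemma mu_sub_le_sum {a : ℕ → ℕ} {t : ℕ} (hmono : ∀ i j, 1 ≤ i → i ≤ j → j ≤ t → a j ≤ a i)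
    {S : Finset ℕ} {t' : ℕ} (ht' : t' ≤ t) (hS : S ⊆ Icc 1 t') :
    mu a t' - mu a (t' - #S) ≤ ∑ j ∈ S, (a j : ℝ) := by
  induction S using Finset.induction_on_max generalizing t' with
  | empty => simp
  | insert m S hlt ih =>
    have hm := mem_Icc.mp (hS (mem_insert_self m S))
    have hmS : m ∉ S := fun h => lt_irrefl m (hlt m h)
    have hS' : S ⊆ Icc 1 (t' - 1) := fun j hj => by
      have := mem_Icc.mp (hS (mem_insert_of_mem hj))
      exact mem_Icc.mpr ⟨this.1, by have := hlt j hj; omega⟩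
    have hmu : mu a t' = mu a (t' - 1) + a t' := by
      rw [← Nat.sub_add_cancel (show 1 ≤ t' by omega), mu_succ, Nat.add_sub_cancel]
    have ha : (a t' : ℝ) ≤ a m := by exact_mod_cast hmono m t' hm.1 hm.2 ht'
    rw [card_insert_of_notMem hmS, sum_insert hmS, show t' - (#S + 1) = t' - 1 - #S by omega]
    linarith [ih (by omega) hS']

lemma sum_mul_eq_sum_filter {ι : Type*} {s : Finset ι} {x : ι → ℝ}
    (hx : ∀ j ∈ s, x j = 0 ∨ x j = 1) (f : ι → ℝ) :
    ∑ j ∈ s, f j * x j = ∑ j ∈ s with x j = 1, f j := by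
  rw [sum_filter]
  refine sum_congr rfl fun j hj => ?_
  rcases hx j hj with h | h <;> simp [h]

theorem lifting_valid_of_superadditive {a : ℕ → ℕ} {t n b : ℕ} {g : ℝ → ℝ}
    (hmono : ∀ i j, 1 ≤ i → i ≤ j → j ≤ t → a j ≤ a i) (hcover : (b : ℝ) < mu a t)
    (htn : t ≤ n) (hg0 : g 0 = 0)
    (hsup : ∀ u v : ℝ, 0 ≤ u → 0 ≤ v → u + v ≤ b → g u + g v ≤ g (u + v))
    (hle : ∀ h, 1 ≤ h → h ≤ t → ∀ z, 0 ≤ z → z ≤ mu a h - lam a t b → g z ≤ h - 1)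
    {x : ℕ → ℝ} (hx : ∀ j, 1 ≤ j → j ≤ n → x j = 0 ∨ x j = 1)
    (hcap : ∑ j ∈ Icc 1 n, (a j : ℝ) * x j ≤ b) :
    ∑ j ∈ Icc 1 t, x j + ∑ j ∈ Icc (t + 1) n, g (a j) * x j ≤ t - 1 := by
  have hx₁ : ∀ j ∈ Icc 1 t, x j = 0 ∨ x j = 1 := fun j hj => by
    have := mem_Icc.mp hj; exact hx j this.1 (by omega)
  have hx₂ : ∀ j ∈ Icc (t + 1) n, x j = 0 ∨ x j = 1 := fun j hj => by
    have := mem_Icc.mp hj; exact hx j (by omega) this.2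
  set S := {j ∈ Icc 1 t | x j = 1}
  set T := {j ∈ Icc (t + 1) n | x j = 1}
  have hxS : ∑ j ∈ Icc 1 t, x j = #S := by
    simpa using sum_mul_eq_sum_filter hx₁ 1
  have hgT : ∑ j ∈ Icc (t + 1) n, g (a j) * x j = ∑ j ∈ T, g (a j) :=
    sum_mul_eq_sum_filter hx₂ _
  have hweight : ∑ j ∈ S, (a j : ℝ) + ∑ j ∈ T, (a j : ℝ) ≤ b := by
    have hIcc (p : ℕ) : Icc 1 p = Ioc 0 p := Icc_add_one_left_eq_Ioc 0 p
    rwa [← sum_mul_eq_sum_filter hx₁, ← sum_mul_eq_sum_filter hx₂, Icc_add_one_left_eq_Ioc, hIcc,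
      sum_Ioc_consecutive _ (Nat.zero_le t) htn, ← hIcc]
  have hS0 : 0 ≤ ∑ j ∈ S, (a j : ℝ) := sum_nonneg fun j _ => Nat.cast_nonneg _
  have hT0 : 0 ≤ ∑ j ∈ T, (a j : ℝ) := sum_nonneg fun j _ => Nat.cast_nonneg _
  have hSsub : S ⊆ Icc 1 t := filter_subset _ _
  have hS := mu_sub_le_sum hmono le_rfl hSsub
  have hSt : #S < t := by
    refine lt_of_le_of_ne ?_ fun h => ?_
    · simpa using card_le_card hSsub
    · rw [h, Nat.sub_self, mu_zero] at hS
      linarith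
  have hg := hle (t - #S) (by omega) (Nat.sub_le _ _) _ hT0 (by unfold lam; linarith)
  rw [hxS, hgT]
  rw [Nat.cast_sub hSt.le] at hg
  linarith [sum_le_of_superadditive hg0 hsup T (fun j _ => Nat.cast_nonneg (a j))
    (by linarith)]

end GkLifting

open GkLifting

theorem gk_lifting_valid_general
    (t n b : ℕ) (a : ℕ → ℕ) (k : ℝ) (g : ℝ → ℝ)
    (hmono : ∀ i j, 1 ≤ i → i ≤ j → j ≤ t → a j ≤ a i)
    (hcover : (b : ℝ) < mu a t)
    (hrho1 : 0 < rho a t b 1)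
    (htn : t < n)
    (hk0 : 0 ≤ k) (hk1 : k ≤ 1 / rho a t b 1)
    (hmain : rho a t b 1 ≤ mu a 1 - lam a t b)
    (hg0 : g 0 = 0)
    (hgF : ∀ h : ℕ, h ≤ t - 1 → ∀ z : ℝ,
      mu a h - lam a t b + rho a t b h < z → z ≤ mu a (h + 1) - lam a t b →
      g z = (h : ℝ))
    (hgS : ∀ h : ℕ, 1 ≤ h → h ≤ t - 1 → ∀ z : ℝ,
      mu a h - lam a t b < z → z ≤ mu a h - lam a t b + rho a t b h →
      g z = (h : ℝ) - wk (rho a t b 1) (k) (mu a h - lam a t b + rho a t b h - z))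
    :
    ∀ x : ℕ → ℝ, (∀ j, 1 ≤ j → j ≤ n → x j = 0 ∨ x j = 1) →
      (∑ j ∈ Finset.Icc 1 n, (a j : ℝ) * x j) ≤ (b : ℝ) →
      (∑ j ∈ Finset.Icc 1 t, x j) + (∑ j ∈ Finset.Icc (t + 1) n, g (a j) * x j)
        ≤ (t : ℝ) - 1 := by
  intro x hx hcap
  have hl : 0 ≤ lam a t b := by unfold lam; linarith
  have hl1 : lam a t b ≤ a 1 := by rw [mu_one] at hmain; linarith
  have hkr : k * rho a t b 1 ≤ 1 := (le_div_iff₀ hrho1).mp hk1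
  have hb : mu a t - lam a t b = b := by unfold lam; ring
  refine lifting_valid_of_superadditive hmono hcover htn.le hg0 (fun u v hu hv huv => ?_)
    (fun h h1 hht z hz0 hz => ?_) hx hcap
  · exact g_superadditive hmono hl hl1 hk0 hkr hgF hgS hrho1 hmain hg0 hu hv (hb ▸ huv)
  · exact g_le_of_le_M hl hk0 hkr hgF hgS hg0 h1 hht hz0 hz

/-- If `k ∈ [0, 1/ρ₁]` and `μ₁ − λ ≥ ρ₁`, the sequence-independent
lifting of the minimal cover inequality by `g_k` is valid for the knapsack set `P`. -/
theorem gk_lifting_valid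
    (t n b : ℕ) (a : ℕ → ℕ) (k : ℝ) (g : ℝ → ℝ)
    (ht : 2 ≤ t)
    (hpos : ∀ i, 1 ≤ i → i ≤ t → 0 < a i)
    (hmono : ∀ i j, 1 ≤ i → i ≤ j → j ≤ t → a j ≤ a i)
    (hcover : (b : ℝ) < mu a t)
    (hmin : mu a t - (a t : ℝ) ≤ (b : ℝ))
    (hrho1 : 0 < rho a t b 1)
    (htn : t < n)
    (hposn : ∀ i, 1 ≤ i → i ≤ n → 0 < a i)
    (halb : ∀ i, 1 ≤ i → i ≤ n → a i ≤ b)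
    (hk0 : 0 ≤ k) (hk1 : k ≤ 1 / rho a t b 1)
    (hmain : rho a t b 1 ≤ mu a 1 - lam a t b)
    (hg0 : g 0 = 0)
    (hgF : ∀ h : ℕ, h ≤ t - 1 → ∀ z : ℝ,
      mu a h - lam a t b + rho a t b h < z → z ≤ mu a (h + 1) - lam a t b →
      g z = (h : ℝ))
    (hgS : ∀ h : ℕ, 1 ≤ h → h ≤ t - 1 → ∀ z : ℝ,
      mu a h - lam a t b < z → z ≤ mu a h - lam a t b + rho a t b h →
      g z = (h : ℝ) - wk (rho a t b 1) (k) (mu a h - lam a t b + rho a t b h - z))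
    :
    ∀ x : ℕ → ℝ, (∀ j, 1 ≤ j → j ≤ n → x j = 0 ∨ x j = 1) →
      (∑ j ∈ Finset.Icc 1 n, (a j : ℝ) * x j) ≤ (b : ℝ) →
      (∑ j ∈ Finset.Icc 1 t, x j) + (∑ j ∈ Finset.Icc (t + 1) n, g (a j) * x j)
        ≤ (t : ℝ) - 1 :=
  gk_lifting_valid_general t n b a k g hmono hcover hrho1 htn hk0 hk1 hmain hg0 hgF hgS
end

section
/- For every ε > 0 and every integer t ≥ 2, there exist an integer n > t, positive integer weights a_1 ≥ a_2 ≥ ⋯ ≥ a_t and a_{t+1}, …, a_n with a_j ≤ b for all j, and a capacity b such that C = {1, …, t} is a minimal cover satisfying μ_1 − λ ≥ ρ_1 > 0, and for every j ∉ C one has g_0(a_j) = 1/2 and g_{1/ρ_1}(a_j) ≤ ε. Consequently PC lifting yields the cut ∑_{j∈C} x_j + ∑_{j∉C} (1/2) x_j ≤ |C| − 1 while the GNS-lifted cut is dominated by ∑_{j∈C} x_j + ∑_{j∉C} ε x_j ≤ |C| − 1. -/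
/-! The instance has `t` cover items of weight `2N`, one further item of weight `N + 1`, and
capacity `b = N(2t - 1)`. Then `λ = ρ₁ = μ₁ - λ = N`, so `S₁ = (N, 2N]` contains the weight `N + 1`,
at distance `N - 1` from the right end of `S₁`. There `g₀` is `1 - 1/2`, while `g_{1/N}` is
`1 - (N - 1)/N = 1/N`, which is below `ε` once `N ≥ 1/ε`. -/

lemma wk_zero (r x : ℝ) : wk r 0 x = 1 / 2 := by
  simp [wk]

lemma wk_one_div {r : ℝ} (hr : r ≠ 0) (x : ℝ) : wk r (1 / r) x = x / r := by
  rw [wk, one_div_mul_cancel hr, sub_self, zero_div, add_zero, one_div_mul_eq_div]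

lemma mu_eq_of_forall_eq {a : ℕ → ℕ} {h c : ℕ} (hc : ∀ i ∈ Finset.Icc 1 h, a i = c) :
    mu a h = h * c := by
  rw [mu, Finset.sum_congr rfl fun i hi => congrArg (Nat.cast (R := ℝ)) (hc i hi),
    Finset.sum_const, Nat.card_Icc, nsmul_eq_mul, Nat.add_sub_cancel]

/-- The clause of the lifting function `g_k` on the strips `S_h`. -/
def LiftingOnStrips (a : ℕ → ℕ) (t b : ℕ) (k : ℝ) (g : ℝ → ℝ) : Prop :=
  ∀ h : ℕ, 1 ≤ h → h ≤ t - 1 → ∀ z : ℝ,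
    mu a h - lam a t b < z → z ≤ mu a h - lam a t b + rho a t b h →
    g z = (h : ℝ) - wk (rho a t b 1) k (mu a h - lam a t b + rho a t b h - z)

lemma LiftingOnStrips.eq_of_mem_strip_one {a : ℕ → ℕ} {t b : ℕ} {k : ℝ} {g : ℝ → ℝ}
    (hg : LiftingOnStrips a t b k g) (ht : 2 ≤ t) {z : ℝ}
    (hz : z ∈ Set.Ioc (mu a 1 - lam a t b) (mu a 1 - lam a t b + rho a t b 1)) :
    g z = 1 - wk (rho a t b 1) k (mu a 1 - lam a t b + rho a t b 1 - z) := by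
  simpa using hg 1 le_rfl (by omega) z hz.1 hz.2

def coverExample (t N i : ℕ) : ℕ := if i ≤ t then 2 * N else N + 1

def coverCapacity (t N : ℕ) : ℕ := N * (2 * t - 1)

section CoverExample

variable {t N : ℕ}

lemma coverExample_of_le {i : ℕ} (hi : i ≤ t) : coverExample t N i = 2 * N := if_pos hi

lemma coverExample_of_lt {i : ℕ} (hi : t < i) : coverExample t N i = N + 1 :=
  if_neg hi.not_ge

lemma coverExample_pos (hN : 0 < N) (i : ℕ) : 0 < coverExample t N i := by
  unfold coverExample; split <;> omega

lemma coverExample_le_coverCapacity (ht : 2 ≤ t) (hN : 0 < N) (i : ℕ) :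
    coverExample t N i ≤ coverCapacity t N := by
  have h3 : 3 ≤ 2 * t - 1 := by omega
  unfold coverExample coverCapacity; split <;> nlinarith

lemma mu_coverExample {h : ℕ} (hh : h ≤ t) : mu (coverExample t N) h = 2 * N * h := by
  rw [mu_eq_of_forall_eq fun i hi => coverExample_of_le ((Finset.mem_Icc.1 hi).2.trans hh)]
  push_cast; ring

lemma mu_one_coverExample (ht : 1 ≤ t) : mu (coverExample t N) 1 = 2 * N := by
  simp [mu_coverExample ht]

lemma lam_coverExample (ht : 1 ≤ t) : lam (coverExample t N) t (coverCapacity t N) = N := by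
  rw [lam, mu_coverExample le_rfl, coverCapacity, Nat.cast_mul, Nat.cast_sub (by omega)]
  push_cast; ring

lemma rho_one_coverExample (ht : 2 ≤ t) :
    rho (coverExample t N) t (coverCapacity t N) 1 = N := by
  rw [rho, lam_coverExample (by omega), coverExample_of_le ht, coverExample_of_le (by omega)]
  push_cast
  rw [max_eq_right (by linarith)]
  ring

lemma LiftingOnStrips.eq_at_coverExample {k : ℝ} {g : ℝ → ℝ}
    (hg : LiftingOnStrips (coverExample t N) t (coverCapacity t N) k g) (ht : 2 ≤ t) (hN : 0 < N) :
    g (N + 1) = 1 - wk N k (N - 1) := by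
  have hN1 : (1 : ℝ) ≤ N := by exact_mod_cast hN
  rw [hg.eq_of_mem_strip_one ht, mu_one_coverExample (by omega), lam_coverExample (by omega),
    rho_one_coverExample ht]
  · ring_nf
  · rw [mu_one_coverExample (by omega), lam_coverExample (by omega), rho_one_coverExample ht]
    constructor <;> linarith

end CoverExample

/-- For every `ε > 0` and every `t ≥ 2` there is a knapsack
constraint with a minimal cover `C = {1, …, t}` satisfying `μ₁ − λ ≥ ρ₁ > 0`
such that PC lifting assigns coefficient `1/2` to every item outside the cover,
while GNS lifting assigns coefficient at most `ε`; hence PC lifting yields the cut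
`∑_{j∈C} x_j + ∑_{j∉C} (1/2)x_j ≤ |C| − 1` while the GNS-lifted cut is dominated by
`∑_{j∈C} x_j + ∑_{j∉C} ε·x_j ≤ |C| − 1`. -/
theorem gns_arbitrarily_worse_than_pc
    (ε : ℝ) (hε : 0 < ε) (t : ℕ) (ht : 2 ≤ t) :
    ∃ (n b : ℕ) (a : ℕ → ℕ),
      t < n ∧
      (∀ i, 1 ≤ i → i ≤ n → 0 < a i) ∧
      (∀ i j, 1 ≤ i → i ≤ j → j ≤ t → a j ≤ a i) ∧
      (∀ i, 1 ≤ i → i ≤ n → a i ≤ b) ∧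
      (b : ℝ) < mu a t ∧
      mu a t - (a t : ℝ) ≤ (b : ℝ) ∧
      0 < rho a t b 1 ∧
      rho a t b 1 ≤ mu a 1 - lam a t b ∧
      (∀ gPC gGNS : ℝ → ℝ,
        (gPC 0 = 0) →
        (∀ h : ℕ, h ≤ t - 1 → ∀ z : ℝ,
          mu a h - lam a t b + rho a t b h < z → z ≤ mu a (h + 1) - lam a t b →
          gPC z = (h : ℝ)) →
        (∀ h : ℕ, 1 ≤ h → h ≤ t - 1 → ∀ z : ℝ,
          mu a h - lam a t b < z → z ≤ mu a h - lam a t b + rho a t b h →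
          gPC z = (h : ℝ) - wk (rho a t b 1) 0 (mu a h - lam a t b + rho a t b h - z)) →
        (gGNS 0 = 0) →
        (∀ h : ℕ, h ≤ t - 1 → ∀ z : ℝ,
          mu a h - lam a t b + rho a t b h < z → z ≤ mu a (h + 1) - lam a t b →
          gGNS z = (h : ℝ)) →
        (∀ h : ℕ, 1 ≤ h → h ≤ t - 1 → ∀ z : ℝ,
          mu a h - lam a t b < z → z ≤ mu a h - lam a t b + rho a t b h →
          gGNS z = (h : ℝ) -
            wk (rho a t b 1) (1 / rho a t b 1) (mu a h - lam a t b + rho a t b h - z)) →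
        ∀ j, t + 1 ≤ j → j ≤ n → gPC (a j) = 1 / 2 ∧ gGNS (a j) ≤ ε) := by
  obtain ⟨m, hm⟩ := exists_nat_one_div_lt hε
  set N := m + 1
  have hN : 0 < N := m.succ_pos
  have hN0 : (0 : ℝ) < N := Nat.cast_pos.2 hN
  have hNε : 1 / (N : ℝ) ≤ ε := by simpa [N] using hm.le
  have hmut : mu (coverExample t N) t = 2 * N * t := mu_coverExample le_rfl
  have hlam := lam_coverExample (t := t) (N := N) (by omega)
  have hrho := rho_one_coverExample (N := N) ht
  have hb : (coverCapacity t N : ℝ) = 2 * N * t - N := by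
    rw [lam, hmut] at hlam; linarith
  refine ⟨t + 1, coverCapacity t N, coverExample t N, t.lt_succ_self,
    fun i _ _ => coverExample_pos hN i,
    fun i j _ hij hjt => by rw [coverExample_of_le hjt, coverExample_of_le (hij.trans hjt)],
    fun i _ _ => coverExample_le_coverCapacity ht hN i, ?_, ?_, ?_, ?_, ?_⟩
  · rw [hb, hmut]; linarith
  · rw [hb, hmut, coverExample_of_le le_rfl]; push_cast; linarith
  · rwa [hrho]
  · rw [hrho, mu_one_coverExample (by omega), hlam]; linarith
  · intro gPC gGNS _ _ hPC _ _ hGNS j hj hjn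
    obtain rfl : j = t + 1 := by omega
    rw [coverExample_of_lt t.lt_succ_self, Nat.cast_add, Nat.cast_one,
      LiftingOnStrips.eq_at_coverExample hPC ht hN, LiftingOnStrips.eq_at_coverExample hGNS ht hN,
      hrho, wk_zero, wk_one_div hN0.ne']
    refine ⟨by norm_num, ?_⟩
    rwa [sub_div, div_self hN0.ne', sub_sub_cancel]
end

section
/- Assume μ_1 − λ ≥ ρ_1 > 0. Let z_1 ∈ S_1 with z_1 ≤ μ_1 − λ + ρ_1/2, and let h ∈ {1, …, t−1} and z_2 ∈ S_h with z_2 ≤ μ_h − λ + ρ_h − ρ_1/2. Then μ_h − λ < z_1 + z_2 ≤ μ_{h+1} − λ; in particular, if z_1 + z_2 ≤ b then f(z_1 + z_2) = h. -/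
/-!
When `ρ_h > 0` we have `(μ_1 − λ) + ρ_h = a_{h+1}`, so the interval `(μ_h − λ, μ_{h+1} − λ]` has
length `(μ_1 − λ) + ρ_h`. The half-margins `ρ_1/2` in the bounds on `z₁` and `z₂` cancel, so
`z₁ + z₂` exceeds `μ_h − λ` by more than `μ_1 − λ ≥ ρ_1 ≥ 0` and by at most `(μ_1 − λ) + ρ_h`. The case
`ρ_h = 0` cannot occur: `z₂ ∈ S_h` with `z₂ ≤ μ_h − λ + ρ_h − ρ_1/2` forces `ρ_h > ρ_1/2 ≥ 0`.
-/

theorem mu_one (a : ℕ → ℕ) : mu a 1 = a 1 := by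
  simp [mu]

theorem rho_nonneg (a : ℕ → ℕ) (t b h : ℕ) : 0 ≤ rho a t b h :=
  le_max_left _ _

theorem rho_eq_of_pos {a : ℕ → ℕ} {t b h : ℕ} (hρ : 0 < rho a t b h) :
    rho a t b h = a (h + 1) - (a 1 - lam a t b) :=
  max_eq_right ((lt_max_iff.mp hρ).resolve_left (lt_irrefl 0)).le

theorem mu_succ_sub_lam_of_rho_pos {a : ℕ → ℕ} {t b h : ℕ} (hρ : 0 < rho a t b h) :
    mu a (h + 1) - lam a t b = (mu a h - lam a t b) + (mu a 1 - lam a t b) + rho a t b h := by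
  rw [rho_eq_of_pos hρ, mu_succ, mu_one]
  ring

theorem pair_sum_location_general
    (t b : ℕ) (a : ℕ → ℕ) (f : ℝ → ℝ) (h : ℕ) (z₁ z₂ : ℝ)
    (hmain : rho a t b 1 ≤ mu a 1 - lam a t b)
    (hfS : ∀ h : ℕ, 1 ≤ h → h ≤ t - 1 → ∀ z : ℝ,
      mu a h - lam a t b < z → z ≤ mu a (h + 1) - lam a t b → f z = (h : ℝ))
    (hh1 : 1 ≤ h) (hht : h ≤ t - 1)
    (hz1l : mu a 1 - lam a t b < z₁)
    (hz1half : z₁ ≤ mu a 1 - lam a t b + rho a t b 1 / 2)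
    (hz2l : mu a h - lam a t b < z₂)
    (hz2half : z₂ ≤ mu a h - lam a t b + rho a t b h - rho a t b 1 / 2) :
    mu a h - lam a t b < z₁ + z₂ ∧ z₁ + z₂ ≤ mu a (h + 1) - lam a t b ∧
    (z₁ + z₂ ≤ (b : ℝ) → f (z₁ + z₂) = (h : ℝ)) := by
  have hρ1 := rho_nonneg a t b 1
  have hρh : 0 < rho a t b h := by linarith
  have hlow : mu a h - lam a t b < z₁ + z₂ := by linarith
  have hup : z₁ + z₂ ≤ mu a (h + 1) - lam a t b := by
    rw [mu_succ_sub_lam_of_rho_pos hρh]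
    linarith
  exact ⟨hlow, hup, fun _ => hfS h hh1 hht _ hlow hup⟩

/-- Assume `μ₁ − λ ≥ ρ₁ > 0`. If `z₁ ∈ S₁` with
`z₁ ≤ μ₁ − λ + ρ₁/2` and `z₂ ∈ S_h` with `z₂ ≤ μ_h − λ + ρ_h − ρ₁/2`, then
`μ_h − λ < z₁ + z₂ ≤ μ_{h+1} − λ`; in particular `f(z₁ + z₂) = h` whenever
`z₁ + z₂ ≤ b`. -/
theorem pair_sum_location
    (t b : ℕ) (a : ℕ → ℕ) (f : ℝ → ℝ) (h : ℕ) (z₁ z₂ : ℝ)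
    (ht : 2 ≤ t)
    (hpos : ∀ i, 1 ≤ i → i ≤ t → 0 < a i)
    (hmono : ∀ i j, 1 ≤ i → i ≤ j → j ≤ t → a j ≤ a i)
    (hcover : (b : ℝ) < mu a t)
    (hmin : mu a t - (a t : ℝ) ≤ (b : ℝ))
    (hrho1 : 0 < rho a t b 1)
    (hmain : rho a t b 1 ≤ mu a 1 - lam a t b)
    (hf0 : ∀ z : ℝ, 0 ≤ z → z ≤ mu a 1 - lam a t b → f z = 0)
    (hfS : ∀ h : ℕ, 1 ≤ h → h ≤ t - 1 → ∀ z : ℝ,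
      mu a h - lam a t b < z → z ≤ mu a (h + 1) - lam a t b → f z = (h : ℝ))
    (hh1 : 1 ≤ h) (hht : h ≤ t - 1)
    (hz1l : mu a 1 - lam a t b < z₁) (hz1r : z₁ ≤ mu a 1 - lam a t b + rho a t b 1)
    (hz1half : z₁ ≤ mu a 1 - lam a t b + rho a t b 1 / 2)
    (hz2l : mu a h - lam a t b < z₂) (hz2r : z₂ ≤ mu a h - lam a t b + rho a t b h)
    (hz2half : z₂ ≤ mu a h - lam a t b + rho a t b h - rho a t b 1 / 2) :
    mu a h - lam a t b < z₁ + z₂ ∧ z₁ + z₂ ≤ mu a (h + 1) - lam a t b ∧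
    (z₁ + z₂ ≤ (b : ℝ) → f (z₁ + z₂) = (h : ℝ)) :=
  pair_sum_location_general t b a f h z₁ z₂ hmain hfS hh1 hht hz1l hz1half hz2l hz2half
end

section
/- Let (u_i)_{i≥1} and (v_i)_{i≥1} be nonincreasing sequences of nonnegative reals with v_1 > 0, u_i + v_i > 0 for all i, and u_1 ≥ v_1. Let h_1, h_2 ≥ 0 be integers and z_1, z_2 reals with z_1 > M_{h_1} + u_{h_1+1} and z_2 > M_{h_2} + u_{h_2+1}. Then z_1 + z_2 > M_{h_1 + h_2 + 1}. -/
/-- `M_h = ∑_{i=1}^h (u_i + v_i)`. -/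
noncomputable def Mseq (u v : ℕ → ℝ) (h : ℕ) : ℝ := ∑ i ∈ Finset.Icc 1 h, (u i + v i)

/-!
Shift to 0-based indexing, `g i = u (i+1) + v (i+1)`, so that `M_h = ∑_{i<h} g i` with `g`
antitone. Splitting `M_{h₁+h₂+1}` after its first `h₁ + 1` terms, the remaining `h₂` terms
`g (h₁+1), …, g (h₁+h₂)` are dominated termwise by `g 1, …, g h₂`, whence
`M_{h₁+h₂+1} + (u₁ + v₁) ≤ M_{h₁+1} + M_{h₂+1}`. Expanding the right-hand side, the surplus over
`(M_{h₁} + u_{h₁+1}) + (M_{h₂} + u_{h₂+1})` is `v_{h₁+1} + v_{h₂+1} ≤ v₁ + u₁`.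
-/

open Finset

theorem Finset.sum_range_succ_add_add_le_of_antitone {α : Type*} [AddCommMonoid α]
    [PartialOrder α] [IsOrderedAddMonoid α] {g : ℕ → α} (hg : Antitone g) (a b : ℕ) :
    ∑ i ∈ range (a + 1 + b), g i + g 0 ≤ ∑ i ∈ range (a + 1), g i + ∑ i ∈ range (b + 1), g i := by
  have htail : ∑ i ∈ range b, g (a + 1 + i) ≤ ∑ i ∈ range b, g (i + 1) :=
    sum_le_sum fun i _ => hg (by omega)
  calc ∑ i ∈ range (a + 1 + b), g i + g 0
      = ∑ i ∈ range (a + 1), g i + (∑ i ∈ range b, g (a + 1 + i) + g 0) := by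
        rw [sum_range_add, add_assoc]
    _ ≤ ∑ i ∈ range (a + 1), g i + (∑ i ∈ range b, g (i + 1) + g 0) := by gcongr
    _ = ∑ i ∈ range (a + 1), g i + ∑ i ∈ range (b + 1), g i := by rw [sum_range_succ' g b]

theorem Mseq_eq_sum_range (u v : ℕ → ℝ) (h : ℕ) :
    Mseq u v h = ∑ i ∈ range h, (u (i + 1) + v (i + 1)) := by
  rw [Mseq, ← Finset.Ico_add_one_right_eq_Icc, sum_Ico_eq_sum_range, Nat.add_sub_cancel]
  simp only [add_comm 1]

theorem Mseq_succ (u v : ℕ → ℝ) (h : ℕ) :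
    Mseq u v (h + 1) = Mseq u v h + (u (h + 1) + v (h + 1)) := by
  rw [Mseq_eq_sum_range, Mseq_eq_sum_range, sum_range_succ]

theorem Mseq_succ_add_add_le {u v : ℕ → ℝ}
    (humono : ∀ i j, 1 ≤ i → i ≤ j → u j ≤ u i)
    (hvmono : ∀ i j, 1 ≤ i → i ≤ j → v j ≤ v i) (a b : ℕ) :
    Mseq u v (a + 1 + b) + (u 1 + v 1) ≤ Mseq u v (a + 1) + Mseq u v (b + 1) := by
  have hg : Antitone fun i => u (i + 1) + v (i + 1) := fun i j hij =>
    add_le_add (humono _ _ (by omega) (by omega)) (hvmono _ _ (by omega) (by omega))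
  simpa only [Mseq_eq_sum_range] using Finset.sum_range_succ_add_add_le_of_antitone hg a b

theorem generalized_sum_beyond_next_breakpoint_general
    (u v : ℕ → ℝ) (h₁ h₂ : ℕ) (z₁ z₂ : ℝ)
    (humono : ∀ i j, 1 ≤ i → i ≤ j → u j ≤ u i)
    (hvmono : ∀ i j, 1 ≤ i → i ≤ j → v j ≤ v i)
    (hu1v1 : v 1 ≤ u 1)
    (hz1 : Mseq u v h₁ + u (h₁ + 1) < z₁)
    (hz2 : Mseq u v h₂ + u (h₂ + 1) < z₂) :
    Mseq u v (h₁ + h₂ + 1) < z₁ + z₂ := by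
  have hsplit := Mseq_succ_add_add_le humono hvmono h₁ h₂
  rw [Mseq_succ, Mseq_succ, show h₁ + 1 + h₂ = h₁ + h₂ + 1 by omega] at hsplit
  have hv₁ : v (h₁ + 1) ≤ v 1 := hvmono 1 _ le_rfl (by omega)
  have hv₂ : v (h₂ + 1) ≤ v 1 := hvmono 1 _ le_rfl (by omega)
  linarith

/-- For nonincreasing nonnegative sequences `(u_i)`, `(v_i)` with
`v₁ > 0`, `u_i + v_i > 0` and `u₁ ≥ v₁`: if `z₁ > M_{h₁} + u_{h₁+1}` and
`z₂ > M_{h₂} + u_{h₂+1}`, then `z₁ + z₂ > M_{h₁+h₂+1}`. -/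
theorem generalized_sum_beyond_next_breakpoint
    (u v : ℕ → ℝ) (h₁ h₂ : ℕ) (z₁ z₂ : ℝ)
    (hu0 : ∀ i, 1 ≤ i → 0 ≤ u i) (hv0 : ∀ i, 1 ≤ i → 0 ≤ v i)
    (humono : ∀ i j, 1 ≤ i → i ≤ j → u j ≤ u i)
    (hvmono : ∀ i j, 1 ≤ i → i ≤ j → v j ≤ v i)
    (hv1 : 0 < v 1)
    (huv : ∀ i, 1 ≤ i → 0 < u i + v i)
    (hu1v1 : v 1 ≤ u 1)
    (hz1 : Mseq u v h₁ + u (h₁ + 1) < z₁)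
    (hz2 : Mseq u v h₂ + u (h₂ + 1) < z₂) :
    Mseq u v (h₁ + h₂ + 1) < z₁ + z₂ :=
  generalized_sum_beyond_next_breakpoint_general u v h₁ h₂ z₁ z₂ humono hvmono hu1v1 hz1 hz2
end

section
/- There exist an integer t ≥ 2, positive integers a_1 ≥ ⋯ ≥ a_t and a capacity b forming a minimal cover with μ_1 − λ ≥ ρ_1 > 0, and a nondecreasing function w : [0, ρ_1] → [0, 1] satisfying w(x) + w(ρ_1 − x) = 1 for all x ∈ [0, ρ_1], such that the function g_w is not superadditive on [0, b]; that is, there exist z_1, z_2 ∈ [0, b] with z_1 + z_2 ≤ b and g_w(z_1) + g_w(z_2) > g_w(z_1 + z_2). (This refutes the claim of Gu, Nemhauser, and Savelsbergh that μ_1 − λ ≥ ρ_1 and symmetry of w suffice for superadditivity.) -/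
section ConstantWeights

variable (c t b : ℕ)

lemma mu_const (h : ℕ) : mu (fun _ => c) h = c * h := by
  simp [mu, mul_comm]

lemma lam_const : lam (fun _ => c) t b = c * t - b := by
  rw [lam, mu_const]

lemma rho_const (h : ℕ) : rho (fun _ => c) t b h = max 0 (c * t - b : ℝ) := by
  rw [rho, lam_const]
  ring_nf

end ConstantWeights

section HalfStep

/-- The unit step at `c`, taking the value `1 / 2` at the jump so that it is symmetric about `c`. -/
noncomputable def halfStep (c x : ℝ) : ℝ := if x < c then 0 else if c < x then 1 else 1 / 2

variable {c x y : ℝ}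

lemma halfStep_of_lt (h : x < c) : halfStep c x = 0 := if_pos h

lemma halfStep_of_gt (h : c < x) : halfStep c x = 1 := by
  rw [halfStep, if_neg h.not_gt, if_pos h]

lemma halfStep_mem_Icc : halfStep c x ∈ Set.Icc 0 1 := by
  unfold halfStep
  split_ifs <;> norm_num

lemma halfStep_monotone : Monotone (halfStep c) := by
  intro x y hxy
  unfold halfStep
  split_ifs <;> linarith

lemma halfStep_add_halfStep (h : x + y = 2 * c) : halfStep c x + halfStep c y = 1 := by
  unfold halfStep
  split_ifs <;> linarith

end HalfStep

/-- There is a minimal cover with `μ₁ − λ ≥ ρ₁ > 0` and a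
nondecreasing symmetric function `w : [0, ρ₁] → [0, 1]` (i.e. `w(x) + w(ρ₁ − x) = 1`)
such that the lifting function `g_w` is **not** superadditive on `[0, b]`. This
refutes the claimed generalization of Gu, Nemhauser, and Savelsbergh. -/
theorem gns_generalization_erratum :
    ∃ (t b : ℕ) (a : ℕ → ℕ) (w : ℝ → ℝ),
      2 ≤ t ∧
      (∀ i, 1 ≤ i → i ≤ t → 0 < a i) ∧
      (∀ i j, 1 ≤ i → i ≤ j → j ≤ t → a j ≤ a i) ∧
      (b : ℝ) < mu a t ∧
      mu a t - (a t : ℝ) ≤ (b : ℝ) ∧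
      0 < rho a t b 1 ∧
      rho a t b 1 ≤ mu a 1 - lam a t b ∧
      (∀ x : ℝ, 0 ≤ x → x ≤ rho a t b 1 → 0 ≤ w x ∧ w x ≤ 1) ∧
      (∀ x y : ℝ, 0 ≤ x → x ≤ y → y ≤ rho a t b 1 → w x ≤ w y) ∧
      (∀ x : ℝ, 0 ≤ x → x ≤ rho a t b 1 → w x + w (rho a t b 1 - x) = 1) ∧
      (∀ g : ℝ → ℝ,
        (g 0 = 0) →
        (∀ h : ℕ, h ≤ t - 1 → ∀ z : ℝ,
          mu a h - lam a t b + rho a t b h < z → z ≤ mu a (h + 1) - lam a t b →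
          g z = (h : ℝ)) →
        (∀ h : ℕ, 1 ≤ h → h ≤ t - 1 → ∀ z : ℝ,
          mu a h - lam a t b < z → z ≤ mu a h - lam a t b + rho a t b h →
          g z = (h : ℝ) - w (mu a h - lam a t b + rho a t b h - z)) →
        ∃ z₁ z₂ : ℝ, 0 ≤ z₁ ∧ z₁ ≤ (b : ℝ) ∧ 0 ≤ z₂ ∧ z₂ ≤ (b : ℝ) ∧
          z₁ + z₂ ≤ (b : ℝ) ∧ g (z₁ + z₂) < g z₁ + g z₂) := by
  refine ⟨3, 13, fun _ => 5, halfStep 1, by norm_num, fun _ _ _ => by norm_num,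
    fun _ _ _ _ _ => le_rfl, ?_⟩
  simp only [mu_const, lam_const, rho_const]
  norm_num
  refine ⟨fun _ _ _ => halfStep_mem_Icc, fun _ _ _ hxy _ => halfStep_monotone hxy,
    fun _ _ _ => halfStep_add_halfStep (by ring), fun g _ _ hS => ?_⟩
  have g₁ : g (21 / 5) = 1 := by
    rw [hS 1 le_rfl (by norm_num) _ (by norm_num) (by norm_num), halfStep_of_lt (by norm_num)]
    norm_num
  have g₂ : g (42 / 5) = 1 := by
    rw [hS 2 (by norm_num) (by norm_num) _ (by norm_num) (by norm_num),
      halfStep_of_gt (by norm_num)]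
    norm_num
  refine ⟨21 / 5, by norm_num, by norm_num, 21 / 5, by norm_num, by norm_num, by norm_num, ?_⟩
  rw [g₁, show (21 / 5 + 21 / 5 : ℝ) = 42 / 5 by norm_num, g₂]
  norm_num
end
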